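/- arXiv:1308.4240 — 4 statements merged into one kernel-verified Lean document; each statement's English description precedes it below -/
import Mathlib

section
/- The Casoratian satisfies the Jacobi-type identity: W_γ[ W_γ[f_1,...,f_n,g], W_γ[f_1,...,f_n,h] ](x) = W_γ[f_1,...,f_n](x) · W_γ[f_1,...,f_n,g,h](x) for all n ≥ 0. -/
/-!
Put all `n + 2` functions into one Casorati matrix `M` of size `n + 2` at `x`. The nodes of
`n + 1` functions at `x ± iγ/2` are those of `n + 2` functions at `x` with the first resp. last
node dropped, so the four Casoratians of `n + 1` functions are the minors of `M` without its last
resp. first row and without one of its last two columns, and `W_γ[f](x)` is the minor without both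
outer rows and both last columns. The outer `2 × 2` Casoratian is therefore the right-hand side of
the Desnanot–Jacobi identity for `M`; the powers of `i` match because
`1 + 2 · (n+1)n/2 = n(n-1)/2 + (n+2)(n+1)/2`.

Desnanot–Jacobi: multiplying `M` by the identity matrix whose last two columns are replaced by
columns `0` and `last` of `adj M` gives `M` with those two columns replaced by `det M • eᵢ`.
Taking determinants, `det M` times a `2 × 2` minor of `adj M` equals `± (det M)²` times the inner
minor; `det M` cancels for the generic matrix, whose determinant is a nonzero polynomial.
-/

/-- The Casorati determinant `W_γ[f_1,…,f_n](x) = i^{n(n-1)/2} det(f_k(x_j^{(n)}))`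
with `x_j^{(n)} = x + i((n+1)/2 - j)γ`; the empty Casoratian equals 1. -/
noncomputable def casoratian (γ : ℝ) {n : ℕ} (f : Fin n → ℂ → ℂ) (x : ℂ) : ℂ :=
  Complex.I ^ (n * (n - 1) / 2) *
    Matrix.det (Matrix.of fun j k : Fin n =>
      f k (x + Complex.I * (((n : ℂ) + 1) / 2 - (((j : ℕ) : ℂ) + 1)) * (γ : ℂ)))

namespace Matrix

variable {R : Type*} [CommRing R]

theorem det_updateCol_single {n : ℕ} (A : Matrix (Fin (n + 1)) (Fin (n + 1)) R)
    (i j : Fin (n + 1)) (c : R) :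
    (A.updateCol j (Pi.single i c)).det =
      (-1) ^ (i + j : ℕ) * c * (A.submatrix i.succAbove j.succAbove).det := by
  rw [det_succ_column _ j, Fintype.sum_eq_single i fun k hk => ?_]
  · simp
  · simp [Pi.single_eq_of_ne hk]

theorem submatrix_updateCol_of_injective {m n o p α : Type*} [DecidableEq n] [DecidableEq p]
    (A : Matrix m n α) {c : p → n} (hc : Function.Injective c) (r : o → m) (j : p)
    (v : m → α) :
    (A.updateCol (c j) v).submatrix r c = (A.submatrix r c).updateCol j (v ∘ r) := by
  ext a b
  simp [updateCol_apply, hc.eq_iff]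

theorem det_eq_det_submatrix_natAdd {m k : ℕ} (X : Matrix (Fin (m + k)) (Fin (m + k)) R)
    (hX : ∀ i j, X i (Fin.castAdd k j) = (1 : Matrix _ _ R) i (Fin.castAdd k j)) :
    X.det = (X.submatrix (Fin.natAdd m) (Fin.natAdd m)).det := by
  rw [← det_submatrix_equiv_self finSumFinEquiv, ← fromBlocks_toBlocks (X.submatrix _ _)]
  have h₁₁ : (X.submatrix finSumFinEquiv finSumFinEquiv).toBlocks₁₁ = 1 := by
    ext i j
    simp [toBlocks₁₁, hX, one_apply]
  have h₂₁ : (X.submatrix finSumFinEquiv finSumFinEquiv).toBlocks₂₁ = 0 := by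
    ext i j
    simp only [toBlocks₂₁, submatrix_apply, finSumFinEquiv_apply_right, finSumFinEquiv_apply_left,
      hX, one_apply, Fin.ext_iff, Fin.val_natAdd, Fin.val_castAdd, of_apply, zero_apply,
      ite_eq_right_iff]
    omega
  rw [h₁₁, h₂₁, det_fromBlocks_zero₂₁, det_one, one_mul]
  rfl

theorem det_mul_desnanot_jacobi {m : ℕ} (M : Matrix (Fin (m + 2)) (Fin (m + 2)) R) :
    M.det * (M.det * (M.submatrix (Fin.castSucc ∘ Fin.succ) (Fin.castSucc ∘ Fin.castSucc)).det) =
      M.det * ((M.submatrix Fin.castSucc Fin.castSucc).det *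
          (M.submatrix Fin.succ (Fin.last m).castSucc.succAbove).det -
        (M.submatrix Fin.castSucc (Fin.last m).castSucc.succAbove).det *
          (M.submatrix Fin.succ Fin.castSucc).det) := by
  set p : Fin (m + 2) := (Fin.last m).castSucc
  set l : Fin (m + 2) := Fin.last (m + 1)
  set X := ((1 : Matrix _ _ R).updateCol p (M.adjugate *ᵥ Pi.single 0 1)).updateCol l
    (M.adjugate *ᵥ Pi.single l 1)
  have hMX : M * X = (M.updateCol p (Pi.single 0 M.det)).updateCol l (Pi.single l M.det) := by
    simp only [X, mul_updateCol, mulVec_mulVec, mul_adjugate, smul_mulVec,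
      one_mulVec, ← Pi.single_smul', smul_eq_mul, mul_one]
  have hX : X.det = (-1) ^ m * ((M.submatrix Fin.castSucc Fin.castSucc).det *
          (M.submatrix Fin.succ p.succAbove).det -
        (M.submatrix Fin.castSucc p.succAbove).det * (M.submatrix Fin.succ Fin.castSucc).det) := by
    have hp : Fin.natAdd m (0 : Fin 2) = p := by ext; simp [p]
    have hl : Fin.natAdd m (1 : Fin 2) = l := by ext; simp [l]
    have hpl : p ≠ l := by simp [p, l, Fin.ext_iff]
    rw [det_eq_det_submatrix_natAdd (k := 2) X fun i j => ?_, det_fin_two]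
    · simp only [submatrix_apply, hp, hl, X, updateCol_self, updateCol_ne hpl,
        mulVec_single_one, col_apply, adjugate_fin_succ_eq_det_submatrix, Fin.succAbove_zero, l, Fin.succAbove_last, p, Fin.val_zero, Fin.val_castSucc,
        Fin.val_last]
      rw [Even.neg_one_pow ⟨m + 1, rfl⟩, Odd.neg_one_pow (n := m + 1 + m) ⟨m, by ring⟩]
      ring
    · have hjp : Fin.castAdd 2 j ≠ p := Fin.ne_of_lt (by simp [Fin.lt_def, p])
      have hjl : Fin.castAdd 2 j ≠ l := Fin.ne_of_lt (by simp [Fin.lt_def, l])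
      simp only [X, updateCol_ne hjp, updateCol_ne hjl]
  have hY : ((M.updateCol p (Pi.single 0 M.det)).updateCol l (Pi.single l M.det)).det =
      (-1) ^ m * (M.det * (M.det *
        (M.submatrix (Fin.castSucc ∘ Fin.succ) (Fin.castSucc ∘ Fin.castSucc)).det)) := by
    rw [det_updateCol_single, Fin.succAbove_last,
      submatrix_updateCol_of_injective _ (Fin.castSucc_injective _)]
    have hsingle : Pi.single (0 : Fin (m + 2)) M.det ∘ Fin.castSucc = Pi.single 0 M.det := by
      ext i
      simp [Pi.single_apply, Fin.castSucc_eq_zero_iff]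
    rw [hsingle, det_updateCol_single, Fin.succAbove_last, submatrix_submatrix,
      Even.neg_one_pow ⟨_, rfl⟩]
    simp only [Fin.val_zero, Fin.val_last, zero_add, Fin.succAbove_zero]
    ring
  have hdet := congrArg det hMX
  rw [det_mul, hX, hY] at hdet
  exact ((isUnit_neg_one (α := R)).pow m).mul_left_cancel (by linear_combination -hdet)

theorem desnanot_jacobi {m : ℕ} (M : Matrix (Fin (m + 2)) (Fin (m + 2)) R) :
    M.det * (M.submatrix (Fin.castSucc ∘ Fin.succ) (Fin.castSucc ∘ Fin.castSucc)).det =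
      (M.submatrix Fin.castSucc Fin.castSucc).det *
          (M.submatrix Fin.succ (Fin.last m).castSucc.succAbove).det -
        (M.submatrix Fin.castSucc (Fin.last m).castSucc.succAbove).det *
          (M.submatrix Fin.succ Fin.castSucc).det := by
  let X := mvPolynomialX (Fin (m + 2)) (Fin (m + 2)) ℤ
  have hX := mul_left_cancel₀ (det_mvPolynomialX_ne_zero _ ℤ) (det_mul_desnanot_jacobi X)
  let φ := MvPolynomial.aeval (R := ℤ) fun p : Fin (m + 2) × Fin (m + 2) => M p.1 p.2
  have hM : X.map φ = M := mvPolynomialX_mapMatrix_aeval ℤ M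
  simpa only [AlgHom.map_det, map_mul, map_sub, AlgHom.mapMatrix_apply, ← submatrix_map, hM]
    using congrArg φ hX

end Matrix

theorem Fin.snoc_snoc_comp_succAbove {n : ℕ} {α : Type*} (f : Fin n → α) (a b : α) :
    (Fin.snoc (Fin.snoc f a) b : Fin (n + 2) → α) ∘ (Fin.last n).castSucc.succAbove =
      Fin.snoc f b := by
  funext k
  cases k using Fin.lastCases with
  | last => simp [Fin.succAbove_of_le_castSucc]
  | cast k => simp [Fin.succAbove_of_castSucc_lt, Fin.lt_def]


open Complex

section Casoratian

variable (γ : ℝ)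

noncomputable def casoratiMatrix (m : ℕ) {ι : Type*} (u : ι → ℂ → ℂ) (x : ℂ) : Matrix (Fin m) ι ℂ :=
  Matrix.of fun j k => u k (x + I * (((m : ℂ) + 1) / 2 - (((j : ℕ) : ℂ) + 1)) * (γ : ℂ))

variable {ι κ : Type*} (u : ι → ℂ → ℂ) (c : κ → ι) (x : ℂ)

theorem casoratian_eq_det {n : ℕ} (f : Fin n → ℂ → ℂ) :
    casoratian γ f x = I ^ (n * (n - 1) / 2) * (casoratiMatrix γ n f x).det :=
  rfl

theorem casoratiMatrix_submatrix_castSucc (m : ℕ) :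
    (casoratiMatrix γ (m + 1) u x).submatrix Fin.castSucc c =
      casoratiMatrix γ m (u ∘ c) (x + I * γ / 2) := by
  ext j k
  simp only [casoratiMatrix, Matrix.submatrix_apply, Matrix.of_apply, Function.comp_apply,
    Fin.val_castSucc]
  push_cast
  ring_nf

theorem casoratiMatrix_submatrix_succ (m : ℕ) :
    (casoratiMatrix γ (m + 1) u x).submatrix Fin.succ c =
      casoratiMatrix γ m (u ∘ c) (x - I * γ / 2) := by
  ext j k
  simp only [casoratiMatrix, Matrix.submatrix_apply, Matrix.of_apply, Function.comp_apply,
    Fin.val_succ]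
  push_cast
  ring_nf

theorem casoratiMatrix_submatrix_castSucc_succ (m : ℕ) :
    (casoratiMatrix γ (m + 2) u x).submatrix (Fin.castSucc ∘ Fin.succ) c =
      casoratiMatrix γ m (u ∘ c) x := by
  ext j k
  simp only [casoratiMatrix, Matrix.submatrix_apply, Matrix.of_apply, Function.comp_apply,
    Fin.val_castSucc, Fin.val_succ]
  push_cast
  ring_nf

theorem casoratian_two (v w : ℂ → ℂ) :
    casoratian γ ![v, w] x =
      I * (v (x + I * γ / 2) * w (x - I * γ / 2) - w (x + I * γ / 2) * v (x - I * γ / 2)) := by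
  rw [casoratian_eq_det, Matrix.det_fin_two]
  simp only [casoratiMatrix, Matrix.of_apply, Matrix.cons_val_zero, Matrix.cons_val_one,
    Fin.val_zero, Fin.val_one]
  norm_num
  ring_nf

end Casoratian

theorem casoratian_jacobi_general (γ : ℝ) (n : ℕ) (f : Fin n → ℂ → ℂ)
    (g h : ℂ → ℂ) (x : ℂ) :
    casoratian γ ![casoratian γ (Fin.snoc f g), casoratian γ (Fin.snoc f h)] x =
      casoratian γ f x * casoratian γ (Fin.snoc (Fin.snoc f g) h) x := by
  set F : Fin (n + 2) → ℂ → ℂ := Fin.snoc (Fin.snoc f g) h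
  have hg : Fin.snoc f g = F ∘ Fin.castSucc := Fin.snoc_comp_castSucc.symm
  have hh : Fin.snoc f h = F ∘ (Fin.last n).castSucc.succAbove :=
    (Fin.snoc_snoc_comp_succAbove f g h).symm
  have hf : f = F ∘ (Fin.castSucc ∘ Fin.castSucc) := by
    simp only [F, ← Function.comp_assoc, Fin.snoc_comp_castSucc]
  rw [casoratian_two]
  simp only [casoratian_eq_det]
  rw [hg, hh, hf, ← casoratiMatrix_submatrix_castSucc, ← casoratiMatrix_submatrix_castSucc,
    ← casoratiMatrix_submatrix_succ, ← casoratiMatrix_submatrix_succ,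
    ← casoratiMatrix_submatrix_castSucc_succ, Nat.triangle_succ, Nat.triangle_succ,
    Nat.triangle_succ]
  linear_combination -(I * (I ^ (n * (n - 1) / 2 + n)) ^ 2) *
    Matrix.desnanot_jacobi (casoratiMatrix γ (n + 2) F x)

/-- Jacobi-type identity for the Casoratian:
`W_γ[W_γ[f_1,…,f_n,g], W_γ[f_1,…,f_n,h]](x) = W_γ[f_1,…,f_n](x) · W_γ[f_1,…,f_n,g,h](x)`
for all `n ≥ 0`. -/
theorem casoratian_jacobi (γ : ℝ) (hγ : γ ≠ 0) (n : ℕ) (f : Fin n → ℂ → ℂ)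
    (g h : ℂ → ℂ) (x : ℂ) :
    casoratian γ ![casoratian γ (Fin.snoc f g), casoratian γ (Fin.snoc f h)] x =
      casoratian γ f x * casoratian γ (Fin.snoc (Fin.snoc f g) h) x :=
  casoratian_jacobi_general γ n f g h x
end

section
/- For the Wilson case, the potential twist relation V(x;λ) + V*(x;λ) = V'(x;λ) + V'*(x;λ) + (b₁ - 2) holds, where V(x;λ) = (∏_{j=1}^4 (a_j + ix)) / (2ix(2ix+1)), V'(x;λ) := V(x; t(λ)) with t(λ) = (1-a₁,1-a₂,1-a₃,1-a₄), b₁ = a₁+a₂+a₃+a₄, and V*(x;λ) := V(x; λ) with i replaced by -i (i.e., V*(x;λ) = (∏_j (a_j - ix)) / (-2ix(-2ix+1)) when all a_j are real). -/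
open Complex

section WilsonPotential

variable {K : Type*} [Field K]

/-- Written in `u = ix`: `V = wilsonPotential a (ix)`, `V* = wilsonPotential a (-ix)`, and `V'`, `V'*`
are the same with `1 - a` in place of `a`. -/
def wilsonPotential (a : Fin 4 → K) (u : K) : K :=
  (∏ j, (a j + u)) / (2 * u * (2 * u + 1))

theorem wilsonPotential_add_neg (a : Fin 4 → K) {u : K} (h2 : (2 : K) ≠ 0) (hu : u ≠ 0)
    (hplus : 2 * u + 1 ≠ 0) (hminus : 2 * u - 1 ≠ 0) :
    wilsonPotential a u + wilsonPotential a (-u) =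
      wilsonPotential (1 - a) u + wilsonPotential (1 - a) (-u) - (2 - ∑ j, a j) := by
  have hpos : 2 * u * (2 * u + 1) ≠ 0 := mul_ne_zero (mul_ne_zero h2 hu) hplus
  have hneg : 2 * -u * (2 * -u + 1) ≠ 0 := by
    rw [mul_neg, neg_add_eq_sub, ← neg_sub, neg_mul_neg]
    exact mul_ne_zero (mul_ne_zero h2 hu) hminus
  simp only [wilsonPotential, Fin.prod_univ_four, Fin.sum_univ_four, Pi.sub_apply, Pi.one_apply]
  rw [div_add_div _ _ hpos hneg, div_add_div _ _ hpos hneg, div_sub' (mul_ne_zero hpos hneg),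
    div_left_inj' (mul_ne_zero hpos hneg)]
  ring

end WilsonPotential

/-- The Wilson additive potential twist relation: with
`V(x) = ∏_j (a_j + ix)/(2ix(2ix+1))`, `V*(x) = ∏_j (a_j - ix)/((-2ix)(-2ix+1))`, and
`V', V'*` the same with `a_j` replaced by `1 - a_j`, one has
`V(x) + V*(x) = V'(x) + V'*(x) - (2 - b₁)` for real `x ≠ 0`, where `b₁ = Σ a_j`. -/
theorem wilson_additive_twist (a : Fin 4 → ℝ) (x : ℝ) (hx : x ≠ 0) :
    (∏ j, ((a j : ℂ) + Complex.I * (x : ℂ))) /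
        (2 * Complex.I * (x : ℂ) * (2 * Complex.I * (x : ℂ) + 1)) +
      (∏ j, ((a j : ℂ) - Complex.I * (x : ℂ))) /
        ((-2 * Complex.I * (x : ℂ)) * (-2 * Complex.I * (x : ℂ) + 1)) =
    (∏ j, (1 - (a j : ℂ) + Complex.I * (x : ℂ))) /
        (2 * Complex.I * (x : ℂ) * (2 * Complex.I * (x : ℂ) + 1)) +
      (∏ j, (1 - (a j : ℂ) - Complex.I * (x : ℂ))) /
        ((-2 * Complex.I * (x : ℂ)) * (-2 * Complex.I * (x : ℂ) + 1)) -
      (2 - (∑ j, ((a j : ℂ)))) := by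
  have hu : I * x ≠ 0 := mul_ne_zero I_ne_zero (ofReal_ne_zero.mpr hx)
  have hplus : 2 * (I * x) + 1 ≠ 0 := fun h ↦ by simpa using congrArg re h
  have hminus : 2 * (I * x) - 1 ≠ 0 := fun h ↦ by simpa using congrArg re h
  have key := wilsonPotential_add_neg (fun j ↦ (a j : ℂ)) two_ne_zero hu hplus hminus
  simp only [wilsonPotential, Pi.sub_apply, Pi.one_apply, ← sub_eq_add_neg] at key
  convert key using 3 <;> ring
end

section
/- For the Askey-Wilson case, the additive twist relation V(x;λ) + V*(x;λ) = α(λ)( V'(x;λ) + V'*(x;λ) ) - α'(λ) holds with α(λ) = b₄ q^{-2} and α'(λ) = -(1-q)(1 - b₄ q^{-2}), where V(x;λ) = ∏_{j=1}^4 (1 - a_j e^{ix}) / ((1-e^{2ix})(1-qe^{2ix})), V' is V with a_j → q a_j^{-1}, and * replaces e^{ix} by e^{-ix}. -/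
/-!
Multiplying numerator and denominator of `V*` by `z⁴`, and of the twisted potentials by
`b₄ = ∏ a_j`, puts `V, V'` over `D₁ = (1 - z²)(1 - qz²)` and `V*, V'*` over
`D₂ = (z² - 1)(z² - q)`. After clearing `D₁ D₂` the relation becomes a polynomial identity in
`q, a_j, z`, which holds coefficientwise.
-/

/-- The Askey-Wilson potential `V(z) = ∏_j (1 - a_j z)/((1-z²)(1-qz²))` in the variable
`z = e^{ix}`. -/
noncomputable def awV (q : ℂ) (a : Fin 4 → ℂ) (z : ℂ) : ℂ :=
  (∏ j, (1 - a j * z)) / ((1 - z ^ 2) * (1 - q * z ^ 2))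

/-- The starred Askey-Wilson potential `V*(z) = ∏_j (1 - a_j z⁻¹)/((1-z⁻²)(1-qz⁻²))`. -/
noncomputable def awVs (q : ℂ) (a : Fin 4 → ℂ) (z : ℂ) : ℂ :=
  (∏ j, (1 - a j * z⁻¹)) / ((1 - (z⁻¹) ^ 2) * (1 - q * (z⁻¹) ^ 2))

open Finset

theorem twist_numerator_identity {R : Type*} [CommRing R] (q b₀ b₁ b₂ b₃ z : R) :
    q ^ 2 * ((1 - b₀ * z) * (1 - b₁ * z) * (1 - b₂ * z) * (1 - b₃ * z)
        * ((z ^ 2 - 1) * (z ^ 2 - q))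
      + (z - b₀) * (z - b₁) * (z - b₂) * (z - b₃) * ((1 - z ^ 2) * (1 - q * z ^ 2)))
    = (b₀ - q * z) * (b₁ - q * z) * (b₂ - q * z) * (b₃ - q * z) * ((z ^ 2 - 1) * (z ^ 2 - q))
        + (b₀ * z - q) * (b₁ * z - q) * (b₂ * z - q) * (b₃ * z - q)
          * ((1 - z ^ 2) * (1 - q * z ^ 2))
      + (1 - q) * (q ^ 2 - b₀ * b₁ * b₂ * b₃)
        * ((1 - z ^ 2) * (1 - q * z ^ 2) * ((z ^ 2 - 1) * (z ^ 2 - q))) := by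
  ring

theorem div_add_div_eq_twist {K : Type*} [Field K] {P Q P' Q' D₁ D₂ b q : K} (hq : q ≠ 0)
    (hb : b ≠ 0) (hD₁ : D₁ ≠ 0) (hD₂ : D₂ ≠ 0)
    (key : q ^ 2 * (P * D₂ + Q * D₁) = P' * D₂ + Q' * D₁ + (1 - q) * (q ^ 2 - b) * (D₁ * D₂)) :
    P / D₁ + Q / D₂ =
      b * (q ^ 2)⁻¹ * (P' / (b * D₁) + Q' / (b * D₂)) + (1 - q) * (1 - b * (q ^ 2)⁻¹) := by
  field_simp
  linear_combination key

theorem awVs_eq (q : ℂ) (a : Fin 4 → ℂ) {z : ℂ} (hz : z ≠ 0) :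
    awVs q a z = (∏ j, (z - a j)) / ((z ^ 2 - 1) * (z ^ 2 - q)) := by
  have hfactor (j : Fin 4) : 1 - a j * z⁻¹ = (z - a j) / z := by field_simp
  have hden : (1 - z⁻¹ ^ 2) * (1 - q * z⁻¹ ^ 2) = (z ^ 2 - 1) * (z ^ 2 - q) / z ^ 4 := by
    field_simp
  simp only [awVs, hfactor, prod_div_distrib, prod_const, card_univ, Fintype.card_fin, hden]
  exact div_div_div_cancel_right₀ (pow_ne_zero 4 hz) _ _

theorem awV_twist_eq (q : ℂ) {a : Fin 4 → ℂ} (ha : ∀ j, a j ≠ 0) (z : ℂ) :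
    awV q (fun j => q / a j) z
      = (∏ j, (a j - q * z)) / ((∏ j, a j) * ((1 - z ^ 2) * (1 - q * z ^ 2))) := by
  have hfactor (j : Fin 4) : 1 - q / a j * z = (a j - q * z) / a j := by field_simp [ha j]
  simp only [awV, hfactor, prod_div_distrib, div_div]

theorem awVs_twist_eq (q : ℂ) {a : Fin 4 → ℂ} (ha : ∀ j, a j ≠ 0) {z : ℂ} (hz : z ≠ 0) :
    awVs q (fun j => q / a j) z
      = (∏ j, (a j * z - q)) / ((∏ j, a j) * ((z ^ 2 - 1) * (z ^ 2 - q))) := by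
  have hfactor (j : Fin 4) : z - q / a j = (a j * z - q) / a j := by field_simp [ha j]
  simp only [awVs_eq _ _ hz, hfactor, prod_div_distrib, div_div]

/-- The Askey-Wilson additive twist relation:
`V + V* = α (V' + V'*) - α'` with `α = b₄ q⁻²`, `α' = -(1-q)(1 - b₄ q⁻²)`, where the twist
replaces `a_j` by `q a_j⁻¹` and `b₄ = a₁a₂a₃a₄`. -/
theorem aw_additive_twist (q : ℂ) (hq : q ≠ 0) (a : Fin 4 → ℂ) (ha : ∀ j, a j ≠ 0)
    (z : ℂ) (hz : z ≠ 0) (h1 : 1 - z ^ 2 ≠ 0) (h2 : 1 - q * z ^ 2 ≠ 0)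
    (h3 : 1 - q * (z⁻¹) ^ 2 ≠ 0) :
    awV q a z + awVs q a z =
      (∏ j, a j) * q ^ (-2 : ℤ) *
          (awV q (fun j => q / a j) z + awVs q (fun j => q / a j) z) +
        (1 - q) * (1 - (∏ j, a j) * q ^ (-2 : ℤ)) := by
  have hz1 : z ^ 2 - 1 ≠ 0 := fun h => h1 (by linear_combination -h)
  have hzq : z ^ 2 - q ≠ 0 := fun h => h3 (by field_simp; linear_combination h)
  rw [awV, awVs_eq q a hz, awV_twist_eq q ha, awVs_twist_eq q ha hz, zpow_neg, zpow_ofNat]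
  refine div_add_div_eq_twist hq (prod_ne_zero_iff.mpr fun j _ => ha j) (mul_ne_zero h1 h2)
    (mul_ne_zero hz1 hzq) ?_
  simp only [Fin.prod_univ_four]
  linear_combination twist_numerator_identity q (a 0) (a 1) (a 2) (a 3) z
end

section
/- For the Askey-Wilson case, the shape-invariance relation V(x; λ + δ) = q · (φ(x - iγ)/φ(x)) · V(x - iγ/2; λ) holds (κ = q^{-1}), where V(x;λ) = ∏_{j=1}^4 (1 - a_j e^{ix}) / ((1-e^{2ix})(1-qe^{2ix})), the shift λ + δ replaces a_j by q^{1/2} a_j, γ = log q, and φ(x) = 2 sin x. -/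
/-!
Scaling the parameters by `c = q^{1/2}` leaves the numerator of `V` unchanged if `z` is scaled
by `c` instead, and it turns the denominator `(1 - z²)(1 - qz²)` of `V(z; ca)` into the
denominator `(1 - qz²)(1 - q²z²)` of `V(cz; a)`; so the two potentials differ by the factor
`(1 - q²z²)/(1 - z²)`. Since `φ(z) = i(1 - z²)/z`, this factor is exactly `q φ(qz)/φ(z)`.
-/

open Complex

/-- `φ(x) = 2 sin x` in the variable `z = e^{ix}`. -/
noncomputable def awPhi (z : ℂ) : ℂ :=
  -I * (z - z⁻¹)

theorem awPhi_eq {z : ℂ} (hz : z ≠ 0) : awPhi z = I * (1 - z ^ 2) / z := by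
  unfold awPhi
  field_simp
  ring

theorem mul_awPhi_mul_div_awPhi {q z : ℂ} (hq : q ≠ 0) (hz : z ≠ 0) :
    q * (awPhi (q * z) / awPhi z) = (1 - q ^ 2 * z ^ 2) / (1 - z ^ 2) := by
  rw [awPhi_eq (mul_ne_zero hq hz), awPhi_eq hz, div_div_div_eq]
  calc q * (I * (1 - (q * z) ^ 2) * z / (q * z * (I * (1 - z ^ 2))))
      = (q * z * I) * (1 - q ^ 2 * z ^ 2) / ((q * z * I) * (1 - z ^ 2)) := by ring
    _ = (1 - q ^ 2 * z ^ 2) / (1 - z ^ 2) :=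
        mul_div_mul_left _ _ (by simp [hq, hz, I_ne_zero])

theorem awV_mul_params {q c : ℂ} (hc : c ^ 2 = q) (a : Fin 4 → ℂ) {z : ℂ}
    (hz : 1 - q ^ 2 * z ^ 2 ≠ 0) :
    awV q (fun j => c * a j) z = (1 - q ^ 2 * z ^ 2) / (1 - z ^ 2) * awV q a (c * z) := by
  have hnum : ∏ j, (1 - c * a j * z) = ∏ j, (1 - a j * (c * z)) :=
    Finset.prod_congr rfl fun j _ => by ring
  have hden : (1 - (c * z) ^ 2) * (1 - q * (c * z) ^ 2) =
      (1 - q * z ^ 2) * (1 - q ^ 2 * z ^ 2) := by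
    rw [mul_pow, hc]
    ring
  unfold awV
  rw [hnum, hden, div_mul_div_comm, ← mul_div_mul_left _ ((1 - z ^ 2) * (1 - q * z ^ 2)) hz]
  ring

theorem aw_shape_invariance_general (q : ℝ) (hq0 : 0 < q) (a : Fin 4 → ℂ)
    (z : ℂ) (hz : z ≠ 0)
    (h3 : 1 - (q : ℂ) ^ 2 * z ^ 2 ≠ 0) :
    awV (q : ℂ) (fun j => (Real.sqrt q : ℂ) * a j) z =
      (q : ℂ) *
        ((-Complex.I * ((q : ℂ) * z - ((q : ℂ) * z)⁻¹)) /
          (-Complex.I * (z - z⁻¹))) *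
        awV (q : ℂ) a ((Real.sqrt q : ℂ) * z) := by
  have hsqrt : (Real.sqrt q : ℂ) ^ 2 = q := by
    rw [← ofReal_pow, Real.sq_sqrt hq0.le]
  have hq : (q : ℂ) ≠ 0 := ofReal_ne_zero.mpr hq0.ne'
  rw [awV_mul_params hsqrt a h3]
  exact congrArg (· * _) (mul_awPhi_mul_div_awPhi hq hz).symm

/-- The Askey-Wilson shape-invariance relation (`κ = q⁻¹`, `γ = log q`,
`φ(z) = -i(z - z⁻¹)`): `V(x; λ+δ) = q (φ(x - iγ)/φ(x)) V(x - iγ/2; λ)`, i.e. in terms of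
`z = e^{ix}`, `V(z; q^{1/2}a) = q (φ(qz)/φ(z)) V(q^{1/2}z; a)`. -/
theorem aw_shape_invariance (q : ℝ) (hq0 : 0 < q) (hq1 : q < 1) (a : Fin 4 → ℂ)
    (z : ℂ) (hz : z ≠ 0) (h1 : 1 - z ^ 2 ≠ 0) (h2 : 1 - (q : ℂ) * z ^ 2 ≠ 0)
    (h3 : 1 - (q : ℂ) ^ 2 * z ^ 2 ≠ 0) :
    awV (q : ℂ) (fun j => (Real.sqrt q : ℂ) * a j) z =
      (q : ℂ) *
        ((-Complex.I * ((q : ℂ) * z - ((q : ℂ) * z)⁻¹)) /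
          (-Complex.I * (z - z⁻¹))) *
        awV (q : ℂ) a ((Real.sqrt q : ℂ) * z) :=
  aw_shape_invariance_general q hq0 a z hz h3
end
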